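/- Next operators for distinct agents commute when both can still receive: (¬X_a⊥ ∧ ¬X_b⊥) → (X_a X_b φ ↔ X_b X_a φ) is valid in AA. -/

import Mathlib

/-- Formulas of asynchronous announcement logic over agents `A` and atoms `P`.
`⊥` is included as a primitive for convenience (it is an abbreviation in the paper). -/
inductive Form (A P : Type) : Type where
  | bot  : Form A P
  | atom : P → Form A P
  | neg  : Form A P → Form A P
  | and  : Form A P → Form A P → Form A P
  | know : A → Form A P → Form A P
  | ann  : Form A P → Form A P → Form A P
  | next : A → Form A P → Form A P

namespace Form

def size {A P : Type} : Form A P → ℕ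
  | bot => 1
  | atom _ => 1
  | neg φ => φ.size + 1
  | and φ ψ => φ.size + ψ.size + 1
  | know _ φ => φ.size + 1
  | ann φ ψ => φ.size + ψ.size + 1
  | next _ φ => φ.size + 1

theorem size_pos {A P : Type} (φ : Form A P) : 1 ≤ φ.size := by
  cases φ <;> simp [size]

end Form

/-- An epistemic frame with valuation: equivalence relations `∼ₐ` and a valuation. -/
structure Frame (A P S : Type) where
  rel : A → S → S → Prop
  equiv : ∀ a, Equivalence (rel a)
  val : P → Set S

/-- `g ≤ₐ f` between cuts. -/
def cutLE {A : Type} (a : A) (g f : A → ℕ) : Prop :=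
  g a = f a ∧ ∀ b, b ≠ a → g b ≤ f a

/-- `f⁺ᵃ`: increment the cut `f` at agent `a`. -/
def inc {A : Type} [DecidableEq A] (a : A) (f : A → ℕ) : A → ℕ :=
  fun b => if b = a then f a + 1 else f b

def histSize {A P : Type} (σ : List (Form A P)) : ℕ := (σ.map Form.size).sum

mutual
/-- Truth in an asynchronous (pre-)model.  The announcement history `σ` is stored
with the most recent announcement first; `f` is the cut, `s` the state. -/
def Sat {A P S : Type} [DecidableEq A] (F : Frame A P S) : List (Form A P) → (A → ℕ) → S → Form A P → Prop
  | _, _, _, .bot => False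
  | _, _, s, .atom p => s ∈ F.val p
  | σ, f, s, .neg φ => ¬ Sat F σ f s φ
  | σ, f, s, .and φ ψ => Sat F σ f s φ ∧ Sat F σ f s ψ
  | σ, f, s, .know a φ =>
      ∀ t g, F.rel a s t → cutLE a g f → Good F σ g t → Sat F σ g t φ
  | σ, f, s, .ann ψ χ => Sat F σ f s ψ → Sat F (ψ :: σ) f s χ
  | σ, f, s, .next a φ => f a < σ.length → Sat F σ (inc a f) s φ
termination_by σ _ _ φ => histSize σ + φ.size
decreasing_by
  all_goals simp_all [histSize, Form.size]
  all_goals first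
    | omega
    | (have := Form.size_pos φ; omega)

/-- `(S,∼,V,s,σ,f)` is an asynchronous model (the history together with the cut
can be generated by truthful announcements and receptions). -/
def Good {A P S : Type} [DecidableEq A] (F : Frame A P S) : List (Form A P) → (A → ℕ) → S → Prop
  | [], f, _ => ∀ a, f a = 0
  | ψ :: σ, f, s =>
      (∀ a, f a ≤ σ.length + 1) ∧
      ∃ f', (∀ a, f' a ≤ f a) ∧ Good F σ f' s ∧ Sat F σ f' s ψ
termination_by σ _ _ => histSize σ + 1
decreasing_by
  all_goals simp_all [histSize, Form.size]
  all_goals (have := Form.size_pos ψ; omega)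
end

theorem inc_comm {A : Type} [DecidableEq A] (a b : A) (f : A → ℕ) :
    inc a (inc b f) = inc b (inc a f) := by
  funext c
  by_cases hca : c = a <;> by_cases hcb : c = b <;> simp_all [inc]

theorem inc_apply_of_ne {A : Type} [DecidableEq A] {a b : A} (hba : b ≠ a) (f : A → ℕ) :
    inc a f b = f b :=
  if_neg hba

section Sat

variable {A P S : Type} [DecidableEq A] (F : Frame A P S)

theorem sat_neg_next_bot_iff (σ : List (Form A P)) (f : A → ℕ) (s : S) (a : A) :
    Sat F σ f s (.neg (.next a .bot)) ↔ f a < σ.length := by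
  simp only [Sat, imp_false, not_not]

theorem sat_next_next_iff {σ : List (Form A P)} {f : A → ℕ} {a b : A} (hab : a ≠ b)
    (ha : f a < σ.length) (hb : f b < σ.length) (s : S) (φ : Form A P) :
    Sat F σ f s (.next a (.next b φ)) ↔ Sat F σ (inc b (inc a f)) s φ := by
  simp only [Sat, inc_apply_of_ne hab.symm, ha, hb, true_implies]

end Sat

/-- Next operators for distinct agents commute when both can still receive:
`(¬Xₐ⊥ ∧ ¬X_b⊥) → (XₐX_bφ ↔ X_bXₐφ)` is valid in AA. -/
theorem next_comm {A P : Type} [DecidableEq A] [Fintype A] [Countable P]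
    (a b : A) (hab : a ≠ b) (φ : Form A P) :
    ∀ (S : Type) (F : Frame A P S) (σ : List (Form A P)) (f : A → ℕ) (s : S),
      Good F σ f s →
      Sat F σ f s (.neg (.next a .bot)) → Sat F σ f s (.neg (.next b .bot)) →
      (Sat F σ f s (.next a (.next b φ)) ↔ Sat F σ f s (.next b (.next a φ))) := by
  intro S F σ f s _ hna hnb
  rw [sat_neg_next_bot_iff] at hna hnb
  rw [sat_next_next_iff F hab hna hnb, sat_next_next_iff F hab.symm hnb hna, inc_comm]
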